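/- Let A and B be real m×n matrices. If A·B' = 0 and A'·B = 0, then ‖A + B‖_* = ‖A‖_* + ‖B‖_*. -/

import Mathlib

/-!
Since `Aᴴ * B = 0`, the Gram matrix `(A + B)ᴴ * (A + B)` splits as `Aᴴ * A + Bᴴ * B`, and
`A * Bᴴ = 0` makes these two positive semidefinite summands annihilate each other. Positive
semidefinite matrices with `a * b = 0` have `√a * √b = 0`, so `√a + √b` is a positive
semidefinite square root of `a + b`; by uniqueness of square roots `√(a + b) = √a + √b`, and the
nuclear norm, being the trace of `√(Xᴴ * X)`, is additive.
-/

open Matrix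

/-- The nuclear norm (sum of singular values) of a real matrix, as the trace of √(XᵀX). -/
noncomputable def nucNorm {m n : Type*} [Fintype m] [Fintype n] [DecidableEq n]
    (X : Matrix m n ℝ) : ℝ :=
  let hA := (Matrix.posSemidef_conjTranspose_mul_self X).1
  ((hA.eigenvectorUnitary : Matrix n n ℝ) * diagonal (fun i => Real.sqrt (hA.eigenvalues i)) *
    (star hA.eigenvectorUnitary : Matrix n n ℝ)).trace

open scoped MatrixOrder ComplexOrder

namespace Matrix

lemma IsHermitian.mul_eq_zero_of_mul_self_mul_mul_self_eq_zero {n R : Type*} [Fintype n]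
    [PartialOrder R] [NonUnitalRing R] [StarRing R] [StarOrderedRing R] [NoZeroDivisors R]
    {P Q : Matrix n n R} (hP : P.IsHermitian) (hQ : Q.IsHermitian) (h : P * P * (Q * Q) = 0) :
    P * Q = 0 := by
  nth_rw 1 [← hP.eq] at h
  nth_rw 2 [← hQ.eq] at h
  rwa [conjTranspose_mul_self_mul_eq_zero, mul_self_mul_conjTranspose_eq_zero] at h

section Sqrt

variable {n 𝕜 : Type*} [Fintype n] [DecidableEq n] [RCLike 𝕜]

lemma sqrt_mul_sqrt_eq_zero_of_mul_eq_zero {a b : Matrix n n 𝕜} (ha : 0 ≤ a) (hb : 0 ≤ b)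
    (hab : a * b = 0) : CFC.sqrt a * CFC.sqrt b = 0 :=
  (CFC.sqrt_nonneg a).posSemidef.1.mul_eq_zero_of_mul_self_mul_mul_self_eq_zero
    (CFC.sqrt_nonneg b).posSemidef.1 <| by
      rwa [CFC.sqrt_mul_sqrt_self a, CFC.sqrt_mul_sqrt_self b]

lemma sqrt_add_of_mul_eq_zero {a b : Matrix n n 𝕜} (ha : 0 ≤ a) (hb : 0 ≤ b)
    (hab : a * b = 0) : CFC.sqrt (a + b) = CFC.sqrt a + CFC.sqrt b := by
  have hba : b * a = 0 := by
    rw [← ha.posSemidef.1.eq, ← hb.posSemidef.1.eq, ← conjTranspose_mul, hab,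
      conjTranspose_zero]
  refine CFC.sqrt_unique ?_ (add_nonneg (CFC.sqrt_nonneg a) (CFC.sqrt_nonneg b))
  rw [add_mul, mul_add, mul_add, sqrt_mul_sqrt_eq_zero_of_mul_eq_zero ha hb hab,
    sqrt_mul_sqrt_eq_zero_of_mul_eq_zero hb ha hba, CFC.sqrt_mul_sqrt_self a,
    CFC.sqrt_mul_sqrt_self b, add_zero, zero_add]

end Sqrt

end Matrix

section NucNorm

variable {m n : Type*} [Fintype m] [Fintype n] [DecidableEq n]

lemma nucNorm_eq_trace_sqrt (X : Matrix m n ℝ) : nucNorm X = (CFC.sqrt (Xᴴ * X)).trace := by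
  have hX := posSemidef_conjTranspose_mul_self X
  have hmax (i : n) : max (hX.1.eigenvalues i) 0 = hX.1.eigenvalues i :=
    max_eq_left (hX.eigenvalues_nonneg i)
  rw [nucNorm, CFC.sqrt_eq_cfc, cfc_nnreal_eq_real _ _ hX.nonneg, hX.1.cfc_eq]
  simp only [IsHermitian.cfc, Unitary.conjStarAlgAut_apply, Real.coe_sqrt, Real.coe_toNNReal',
    Function.comp_def, hmax]
  rfl

lemma nucNorm_add_of_mul_conjTranspose_eq_zero {A B : Matrix m n ℝ} (hAB : A * Bᴴ = 0)
    (hAB' : Aᴴ * B = 0) : nucNorm (A + B) = nucNorm A + nucNorm B := by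
  have hBA' : Bᴴ * A = 0 := by
    rw [← conjTranspose_conjTranspose A, ← conjTranspose_mul, hAB', conjTranspose_zero]
  have hGram : (A + B)ᴴ * (A + B) = Aᴴ * A + Bᴴ * B := by
    rw [conjTranspose_add, Matrix.add_mul, Matrix.mul_add, Matrix.mul_add, hAB', hBA', add_zero,
      zero_add]
  have hGramMul : Aᴴ * A * (Bᴴ * B) = 0 := by
    rw [Matrix.mul_assoc, ← Matrix.mul_assoc A, hAB, Matrix.zero_mul, Matrix.mul_zero]
  rw [nucNorm_eq_trace_sqrt, nucNorm_eq_trace_sqrt, nucNorm_eq_trace_sqrt, hGram,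
    sqrt_add_of_mul_eq_zero (posSemidef_conjTranspose_mul_self A).nonneg
      (posSemidef_conjTranspose_mul_self B).nonneg hGramMul, trace_add]

end NucNorm

/-- If ABᵀ = 0 and AᵀB = 0 then the nuclear norm is additive: ‖A + B‖₊ = ‖A‖₊ + ‖B‖₊. -/
theorem nucNorm_add_of_orthogonal (m n : ℕ) (A B : Matrix (Fin m) (Fin n) ℝ)
    (h₁ : A * Bᵀ = 0) (h₂ : Aᵀ * B = 0) :
    nucNorm (A + B) = nucNorm A + nucNorm B :=
  nucNorm_add_of_mul_conjTranspose_eq_zero (by simpa using h₁) (by simpa using h₂)
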